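/- Let S be an α-stable subordinator with index α ∈ (0,1). If θ ∈ (0, 1/α), then almost surely, for every T > 0, the Lebesgue–Stieltjes integral ∫_0^T t^{-θ} dS_t is finite. -/

import Mathlib

/-!
Along the geometric times `rⁿ`, the Laplace transform and Markov's inequality give
`ℙ(S_{rⁿ} ≥ r^{nγ}) ≲ r^{n(1 - γα)}`, which is summable when `γα < 1`; by Borel–Cantelli, almost
surely `S_{rⁿ} < r^{nγ}` for all large `n`. For such a path, pick `γ ∈ (θ, 1/α)`: the integral of
`t^{-θ}` over the shell `(r^{n+1}, rⁿ]` is at most `r^{-(n+1)θ} S_{rⁿ} ≲ r^{n(γ - θ)}`, again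
a convergent geometric series, while away from `0` the integrand is bounded.
-/

open MeasureTheory ProbabilityTheory Filter Set
open scoped ENNReal NNReal Topology

/-- An `α`-stable subordinator on a probability space `Ω`: a real-valued process with
`S 0 = 0`, stationary independent increments, almost surely nondecreasing right-continuous
sample paths, and Laplace transform `E[exp (-λ S t)] = exp (-t λ^α)`.
The process is extended by `0` to nonpositive times, so that the a.s. path regularity on
`[0, ∞)` can be expressed as regularity of the extended path on all of `ℝ`. -/
structure StableSubordinator (Ω : Type*) [MeasureSpace Ω] [IsProbabilityMeasure (ℙ : Measure Ω)]
    (α : ℝ) where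
  S : ℝ → Ω → ℝ
  measurable : ∀ t : ℝ, Measurable (S t)
  zero_of_nonpos : ∀ t : ℝ, t ≤ 0 → ∀ ω, S t ω = 0
  path : ∀ᵐ ω : Ω, Monotone (fun t => S t ω) ∧
    ∀ x : ℝ, ContinuousWithinAt (fun t => S t ω) (Set.Ici x) x
  indep_increments : ∀ (n : ℕ) (t : Fin (n + 1) → ℝ), Monotone t → (∀ i, 0 ≤ t i) →
    iIndepFun
      (fun (i : Fin n) ω => S (t i.succ) ω - S (t i.castSucc) ω) ℙ
  stationary_increments : ∀ s t : ℝ, 0 ≤ s → s ≤ t →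
    Measure.map (fun ω => S t ω - S s ω) ℙ = Measure.map (S (t - s)) ℙ
  laplace : ∀ lam : ℝ, 0 < lam → ∀ t : ℝ, 0 ≤ t →
    ∫ ω, Real.exp (-lam * S t ω) ∂ℙ = Real.exp (-t * lam ^ α)

open Classical in
/-- The Lebesgue–Stieltjes measure induced by a nondecreasing right-continuous path
(junk value `0` if the path is not such). -/
noncomputable def pathMeasure (f : ℝ → ℝ) : Measure ℝ :=
  if h : Monotone f ∧ ∀ x : ℝ, ContinuousWithinAt f (Set.Ici x) x then
    StieltjesFunction.measure ⟨f, h.1, h.2⟩ else 0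

theorem setLIntegral_Ioc_rpow_neg_lt_top (μ : Measure ℝ) [IsLocallyFiniteMeasure μ]
    {a b : ℝ} (ha : 0 < a) (θ : ℝ) :
    ∫⁻ t in Ioc a b, ENNReal.ofReal (t ^ (-θ)) ∂μ < ∞ := by
  have hcont : ContinuousOn (fun t : ℝ => t ^ (-θ)) (Icc a b) := fun t ht =>
    (Real.continuousAt_rpow_const t (-θ) (Or.inl (ha.trans_le ht.1).ne')).continuousWithinAt
  exact (hcont.integrableOn_Icc.mono_set Ioc_subset_Icc_self).setLIntegral_lt_top

theorem setLIntegral_Ioc_zero_rpow_neg_lt_top (μ : Measure ℝ) {θ γ b r : ℝ}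
    (hθ : 0 ≤ θ) (hθγ : θ < γ) (hb : 0 < b) (hr₀ : 0 < r) (hr₁ : r < 1)
    (hμ : ∀ n : ℕ, μ (Ioc 0 (b * r ^ n)) ≤ ENNReal.ofReal ((b * r ^ n) ^ γ)) :
    ∫⁻ t in Ioc 0 b, ENNReal.ofReal (t ^ (-θ)) ∂μ < ∞ := by
  have hcover : Ioc 0 b ⊆ ⋃ n : ℕ, Ioc (b * r ^ (n + 1)) (b * r ^ n) := by
    rintro t ⟨ht₀, htb⟩
    obtain ⟨n, hlt, hle⟩ := exists_nat_pow_near_of_lt_one (div_pos ht₀ hb)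
      ((div_le_one hb).2 htb) hr₀ hr₁
    exact mem_iUnion.2 ⟨n, (lt_div_iff₀' hb).1 hlt, (div_le_iff₀' hb).1 hle⟩
  have hterm : ∀ n : ℕ, ∫⁻ t in Ioc (b * r ^ (n + 1)) (b * r ^ n), ENNReal.ofReal (t ^ (-θ)) ∂μ ≤
      ENNReal.ofReal (r ^ (-θ) * b ^ (γ - θ) * (r ^ (γ - θ)) ^ n) := by
    intro n
    have hq : 0 < b * r ^ n := mul_pos hb (pow_pos hr₀ n)
    calc ∫⁻ t in Ioc (b * r ^ (n + 1)) (b * r ^ n), ENNReal.ofReal (t ^ (-θ)) ∂μ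
        ≤ ∫⁻ _ in Ioc (b * r ^ (n + 1)) (b * r ^ n), ENNReal.ofReal ((b * r ^ (n + 1)) ^ (-θ)) ∂μ :=
          setLIntegral_mono measurable_const fun t ht => ENNReal.ofReal_le_ofReal <|
            Real.rpow_le_rpow_of_nonpos (by positivity) ht.1.le (neg_nonpos.2 hθ)
      _ = ENNReal.ofReal ((b * r ^ (n + 1)) ^ (-θ)) * μ (Ioc (b * r ^ (n + 1)) (b * r ^ n)) :=
          setLIntegral_const _ _
      _ ≤ ENNReal.ofReal ((b * r ^ (n + 1)) ^ (-θ)) * ENNReal.ofReal ((b * r ^ n) ^ γ) := by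
          gcongr
          exact (measure_mono (Ioc_subset_Ioc_left (by positivity))).trans (hμ n)
      _ = ENNReal.ofReal (r ^ (-θ) * b ^ (γ - θ) * (r ^ (γ - θ)) ^ n) := by
          rw [← ENNReal.ofReal_mul (by positivity), pow_succ, ← mul_assoc,
            Real.mul_rpow hq.le hr₀.le, mul_right_comm, ← Real.rpow_add hq, neg_add_eq_sub,
            Real.mul_rpow hb.le (pow_nonneg hr₀.le n), ← Real.rpow_pow_comm hr₀.le]
          ring_nf
  have hsummable : Summable fun n : ℕ => r ^ (-θ) * b ^ (γ - θ) * (r ^ (γ - θ)) ^ n :=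
    (summable_geometric_of_lt_one (by positivity)
      (Real.rpow_lt_one hr₀.le hr₁ (sub_pos.2 hθγ))).mul_left _
  calc ∫⁻ t in Ioc 0 b, ENNReal.ofReal (t ^ (-θ)) ∂μ
      ≤ ∑' n : ℕ, ∫⁻ t in Ioc (b * r ^ (n + 1)) (b * r ^ n), ENNReal.ofReal (t ^ (-θ)) ∂μ :=
        (lintegral_mono_set hcover).trans (lintegral_iUnion_le _ _)
    _ ≤ ∑' n : ℕ, ENNReal.ofReal (r ^ (-θ) * b ^ (γ - θ) * (r ^ (γ - θ)) ^ n) :=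
        ENNReal.tsum_le_tsum hterm
    _ < ∞ := by
        rw [← ENNReal.ofReal_tsum_of_nonneg (fun n => by positivity) hsummable]
        exact ENNReal.ofReal_lt_top

theorem StieltjesFunction.setLIntegral_Ioc_zero_rpow_neg_lt_top (f : StieltjesFunction ℝ)
    (hf₀ : f 0 = 0) {θ γ r : ℝ} (hθ : 0 ≤ θ) (hθγ : θ < γ) (hr₀ : 0 < r) (hr₁ : r < 1)
    (hf : ∀ᶠ n : ℕ in atTop, f (r ^ n) ≤ (r ^ n) ^ γ) (T : ℝ) :
    ∫⁻ t in Ioc 0 T, ENNReal.ofReal (t ^ (-θ)) ∂f.measure < ∞ := by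
  obtain ⟨N, hN⟩ := eventually_atTop.1 hf
  have hb : 0 < r ^ N := pow_pos hr₀ N
  have hμ (n : ℕ) : f.measure (Ioc 0 (r ^ N * r ^ n)) ≤ ENNReal.ofReal ((r ^ N * r ^ n) ^ γ) := by
    rw [f.measure_Ioc, hf₀, sub_zero, ← pow_add]
    exact ENNReal.ofReal_le_ofReal (hN _ (Nat.le_add_right N n))
  calc ∫⁻ t in Ioc 0 T, ENNReal.ofReal (t ^ (-θ)) ∂f.measure
      ≤ ∫⁻ t in Ioc 0 (r ^ N) ∪ Ioc (r ^ N) T, ENNReal.ofReal (t ^ (-θ)) ∂f.measure :=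
        lintegral_mono_set Ioc_subset_Ioc_union_Ioc
    _ ≤ _ := lintegral_union_le _ _ _
    _ < ∞ := ENNReal.add_lt_top.2
        ⟨_root_.setLIntegral_Ioc_zero_rpow_neg_lt_top _ hθ hθγ hb hr₀ hr₁ hμ,
          setLIntegral_Ioc_rpow_neg_lt_top _ hb θ⟩

theorem mul_measureReal_inv_le_le_one_sub_integral_exp {Ω : Type*} [MeasurableSpace Ω]
    {μ : Measure Ω} [IsProbabilityMeasure μ] {Y : Ω → ℝ} (hY : AEMeasurable Y μ)
    (hY₀ : ∀ᵐ ω ∂μ, 0 ≤ Y ω) {lam : ℝ} (hlam : 0 < lam) :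
    (1 - Real.exp (-1)) * μ.real {ω | lam⁻¹ ≤ Y ω} ≤ 1 - ∫ ω, Real.exp (-lam * Y ω) ∂μ := by
  have hexp_le : ∀ᵐ ω ∂μ, Real.exp (-lam * Y ω) ≤ 1 := hY₀.mono fun ω h =>
    Real.exp_le_one_iff.2 (by nlinarith)
  have hint : Integrable (fun ω => Real.exp (-lam * Y ω)) μ := by
    refine (integrable_const (1 : ℝ)).mono' ((hY.const_mul _).exp.aestronglyMeasurable) ?_
    filter_upwards [hexp_le] with ω h
    rwa [Real.norm_eq_abs, abs_of_pos (Real.exp_pos _)]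
  have hsub : {ω | lam⁻¹ ≤ Y ω} ⊆ {ω | 1 - Real.exp (-1) ≤ 1 - Real.exp (-lam * Y ω)} := by
    intro ω hω
    have : 1 ≤ lam * Y ω := (inv_le_iff_one_le_mul₀' hlam).1 hω
    simp only [mem_ofPred_eq, sub_le_sub_iff_left, Real.exp_le_exp]
    linarith
  calc (1 - Real.exp (-1)) * μ.real {ω | lam⁻¹ ≤ Y ω}
      ≤ (1 - Real.exp (-1)) * μ.real {ω | 1 - Real.exp (-1) ≤ 1 - Real.exp (-lam * Y ω)} := by
        gcongr
        · exact sub_nonneg.2 (Real.exp_le_one_iff.2 (by norm_num))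
        · exact measure_ne_top _ _
    _ ≤ ∫ ω, (1 - Real.exp (-lam * Y ω)) ∂μ :=
        mul_meas_ge_le_integral_of_nonneg (hexp_le.mono fun ω h => sub_nonneg.2 h)
          ((integrable_const 1).sub hint) _
    _ = 1 - ∫ ω, Real.exp (-lam * Y ω) ∂μ := by
        rw [integral_sub (integrable_const 1) hint, integral_const, probReal_univ, one_smul]

namespace StableSubordinator

variable {Ω : Type*} [MeasureSpace Ω] [IsProbabilityMeasure (ℙ : Measure Ω)] {α : ℝ}
  (X : StableSubordinator Ω α)

theorem ae_nonneg (t : ℝ) : ∀ᵐ ω, 0 ≤ X.S t ω := by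
  filter_upwards [X.path] with ω hω
  rcases le_total t 0 with ht | ht
  · exact (X.zero_of_nonpos t ht ω).ge
  · exact (X.zero_of_nonpos 0 le_rfl ω).symm.trans_le (hω.1 ht)

theorem measure_inv_le_S_le {t lam : ℝ} (ht : 0 ≤ t) (hlam : 0 < lam) :
    ℙ {ω | lam⁻¹ ≤ X.S t ω} ≤ ENNReal.ofReal (t * lam ^ α / (1 - Real.exp (-1))) := by
  have hc : 0 < 1 - Real.exp (-1) := sub_pos.2 (Real.exp_lt_one_iff.2 (by norm_num))
  have hmarkov := mul_measureReal_inv_le_le_one_sub_integral_exp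
    (X.measurable t).aemeasurable (X.ae_nonneg t) hlam
  rw [X.laplace lam hlam t ht] at hmarkov
  rw [← ofReal_measureReal]
  refine ENNReal.ofReal_le_ofReal ((le_div_iff₀' hc).2 (hmarkov.trans ?_))
  linarith [Real.add_one_le_exp (-t * lam ^ α)]

theorem ae_eventually_lt_rpow {r γ : ℝ} (hr₀ : 0 < r) (hr₁ : r < 1) (hγα : γ * α < 1) :
    ∀ᵐ ω, ∀ᶠ n : ℕ in atTop, X.S (r ^ n) ω < (r ^ n) ^ γ := by
  have hbound (n : ℕ) : ℙ {ω | (r ^ n) ^ γ ≤ X.S (r ^ n) ω} ≤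
      ENNReal.ofReal ((r ^ (1 - γ * α)) ^ n / (1 - Real.exp (-1))) := by
    have hq : 0 < r ^ n := pow_pos hr₀ n
    rw [Real.rpow_pow_comm hr₀.le]
    have := X.measure_inv_le_S_le hq.le (Real.rpow_pos_of_pos hq (-γ))
    rwa [← Real.rpow_neg hq.le, neg_neg, ← Real.rpow_mul hq.le, ← Real.rpow_one_add' hq.le
      (by linarith), neg_mul, ← sub_eq_add_neg] at this
  have hsum : ∑' n : ℕ, ℙ {ω | (r ^ n) ^ γ ≤ X.S (r ^ n) ω} ≠ ∞ := by
    refine ne_top_of_le_ne_top ?_ (ENNReal.tsum_le_tsum hbound)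
    rw [← ENNReal.ofReal_tsum_of_nonneg (fun n => div_nonneg (by positivity)
      (sub_nonneg.2 (Real.exp_le_one_iff.2 (by norm_num))))
      ((summable_geometric_of_lt_one (by positivity)
        (Real.rpow_lt_one hr₀.le hr₁ (by linarith))).div_const _)]
    exact ENNReal.ofReal_ne_top
  filter_upwards [ae_eventually_notMem hsum] with ω hω
  exact hω.mono fun n hn => lt_of_not_ge hn

end StableSubordinator

theorem pathMeasure_of_monotone {f : ℝ → ℝ}
    (hf : Monotone f ∧ ∀ x, ContinuousWithinAt f (Ici x) x) :
    pathMeasure f = (⟨f, hf.1, hf.2⟩ : StieltjesFunction ℝ).measure :=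
  dif_pos hf

theorem singular_integral_finite_general {Ω : Type*} [MeasureSpace Ω]
    [IsProbabilityMeasure (ℙ : Measure Ω)] {α : ℝ}
    (X : StableSubordinator Ω α) {θ : ℝ} (hθ : θ ∈ Set.Ioo 0 (1 / α)) :
    ∀ᵐ ω : Ω, ∀ T : ℝ, 0 < T →
      ∫⁻ t in Set.Ioc (0 : ℝ) T, ENNReal.ofReal (t ^ (-θ))
        ∂(pathMeasure (fun t => X.S t ω)) < ∞ := by
  obtain ⟨hθ₀, hθα⟩ := hθ
  have hα : 0 < α := one_div_pos.1 (hθ₀.trans hθα)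
  obtain ⟨γ, hθγ, hγα⟩ := exists_between hθα
  have hr₀ : (0 : ℝ) < 2⁻¹ := by norm_num
  have hr₁ : (2⁻¹ : ℝ) < 1 := by norm_num
  filter_upwards [X.path, X.ae_eventually_lt_rpow hr₀ hr₁ ((lt_div_iff₀ hα).1 hγα)]
    with ω hpath hsmall T _
  rw [pathMeasure_of_monotone hpath]
  exact StieltjesFunction.setLIntegral_Ioc_zero_rpow_neg_lt_top _ (X.zero_of_nonpos 0 le_rfl ω)
    hθ₀.le hθγ hr₀ hr₁ (hsmall.mono fun _ h => h.le) T

/-- If `θ ∈ (0, 1/α)`, then almost surely, for every `T > 0`, the Lebesgue–Stieltjes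
integral `∫_0^T t^(-θ) dS_t` is finite. -/
theorem singular_integral_finite {Ω : Type*} [MeasureSpace Ω]
    [IsProbabilityMeasure (ℙ : Measure Ω)] {α : ℝ} (hα : α ∈ Set.Ioo (0 : ℝ) 1)
    (X : StableSubordinator Ω α) {θ : ℝ} (hθ : θ ∈ Set.Ioo 0 (1 / α)) :
    ∀ᵐ ω : Ω, ∀ T : ℝ, 0 < T →
      ∫⁻ t in Set.Ioc (0 : ℝ) T, ENNReal.ofReal (t ^ (-θ))
        ∂(pathMeasure (fun t => X.S t ω)) < ∞ :=
  singular_integral_finite_general X hθ
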